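/- arXiv:2604.25151 — 4 statements merged into one kernel-verified Lean document; each statement's English description precedes it below -/
import Mathlib

section
/- Let F(z) = z^4/(1 − z^2) + z^9/(1 − z^3), with coefficient sequence (a_n). Then a_p = 0 for every prime p, yet there do not exist an integer d > 1, a polynomial P(z), and a rational power series G such that F(z) = P(z) + G(z^d) as formal power series. -/
/-! For every `d > 1`, `a_n ≠ 0` for infinitely many `n` not divisible by `d` (the even
numbers `2dk + 2` if `d ≠ 2`, the odd multiples of `3` if `d = 2`), whereas the coefficients of
`P(z) + G(z^d)` vanish at every `n > deg P` not divisible by `d`. -/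

/-- A formal power series `F` is *rational* if there are polynomials `P, Q` with
`Q(0) ≠ 0` such that `Q * F = P` as formal power series. -/
def IsRationalPS (F : PowerSeries ℂ) : Prop :=
  ∃ (P Q : Polynomial ℂ), Q.coeff 0 ≠ 0 ∧ (Q : PowerSeries ℂ) * F = (P : PowerSeries ℂ)

/-- For `G(z) = ∑ g_k z^k`, `substPow G d` is the power series `G(z^d) = ∑ g_k z^{d k}`. -/
noncomputable def substPow (G : PowerSeries ℂ) (d : ℕ) : PowerSeries ℂ :=
  PowerSeries.mk fun n => if d ∣ n then PowerSeries.coeff (n / d) G else 0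

/-- The coefficients of `F(z) = z^4/(1 - z^2) + z^9/(1 - z^3)`:
`a n = [n ≥ 4 and 2 ∣ n] + [n ≥ 9 and 3 ∣ n]`. -/
noncomputable def exCoeff (n : ℕ) : ℂ :=
  (if 4 ≤ n ∧ 2 ∣ n then 1 else 0) + (if 9 ≤ n ∧ 3 ∣ n then 1 else 0)

theorem coeff_substPow_of_not_dvd (G : PowerSeries ℂ) {d n : ℕ} (h : ¬ d ∣ n) :
    PowerSeries.coeff n (substPow G d) = 0 := by
  simp only [substPow, PowerSeries.coeff_mk, if_neg h]

theorem coeff_eq_zero_of_mk_eq_add_substPow {a : ℕ → ℂ} {P : Polynomial ℂ}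
    {G : PowerSeries ℂ} {d : ℕ} (hF : PowerSeries.mk a = (P : PowerSeries ℂ) + substPow G d)
    {n : ℕ} (hn : P.natDegree < n) (hdn : ¬ d ∣ n) : a n = 0 := by
  have := congrArg (PowerSeries.coeff n) hF
  rwa [map_add, PowerSeries.coeff_mk, Polynomial.coeff_coe,
    Polynomial.coeff_eq_zero_of_natDegree_lt hn, coeff_substPow_of_not_dvd G hdn,
    add_zero] at this

theorem exCoeff_prime {p : ℕ} (hp : p.Prime) : exCoeff p = 0 := by
  have h2 : ¬ (4 ≤ p ∧ 2 ∣ p) := fun ⟨h4, h2⟩ => by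
    rcases hp.eq_one_or_self_of_dvd 2 h2 with h | h <;> omega
  have h3 : ¬ (9 ≤ p ∧ 3 ∣ p) := fun ⟨h9, h3⟩ => by
    rcases hp.eq_one_or_self_of_dvd 3 h3 with h | h <;> omega
  simp only [exCoeff, if_neg h2, if_neg h3, add_zero]

theorem exCoeff_ne_zero_of_two_dvd {n : ℕ} (h4 : 4 ≤ n) (h2 : 2 ∣ n) : exCoeff n ≠ 0 := by
  rw [exCoeff, if_pos ⟨h4, h2⟩]
  split_ifs <;> norm_num

theorem exCoeff_ne_zero_of_three_dvd {n : ℕ} (h9 : 9 ≤ n) (h3 : 3 ∣ n) : exCoeff n ≠ 0 := by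
  rw [exCoeff, if_pos (show 9 ≤ n ∧ 3 ∣ n from ⟨h9, h3⟩)]
  split_ifs <;> norm_num

theorem exists_exCoeff_ne_zero_not_dvd {d : ℕ} (hd : 1 < d) (N : ℕ) :
    ∃ n, N < n ∧ ¬ d ∣ n ∧ exCoeff n ≠ 0 := by
  by_cases hd2 : d = 2
  · subst hd2
    exact ⟨6 * N + 9, by omega, by omega, exCoeff_ne_zero_of_three_dvd (by omega) (by omega)⟩
  · have hN : N < 2 * d * (N + 1) + 2 := by nlinarith
    refine ⟨2 * d * (N + 1) + 2, hN, fun hdvd => hd2 ?_, ?_⟩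
    · have h : d ∣ 2 := (Nat.dvd_add_right (Dvd.intro (2 * (N + 1)) (by ring))).mp hdvd
      exact le_antisymm (Nat.le_of_dvd two_pos h) hd
    · exact exCoeff_ne_zero_of_two_dvd (by nlinarith) ⟨d * (N + 1) + 1, by ring⟩

/-- The coefficients of `F(z) = z^4/(1-z^2) + z^9/(1-z^3)` vanish at every prime
index, yet `F` is not of the form `P(z) + G(z^d)` for a single `d > 1`, a polynomial
`P`, and a rational power series `G`. -/
theorem stmt_5 :
    (∀ p : ℕ, Nat.Prime p → exCoeff p = 0) ∧
    ¬ ∃ (d : ℕ) (P : Polynomial ℂ) (G : PowerSeries ℂ), 1 < d ∧ IsRationalPS G ∧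
        PowerSeries.mk exCoeff = (P : PowerSeries ℂ) + substPow G d := by
  refine ⟨fun p hp => exCoeff_prime hp, ?_⟩
  rintro ⟨d, P, G, hd, -, hF⟩
  obtain ⟨n, hn, hdn, hne⟩ := exists_exCoeff_ne_zero_not_dvd hd P.natDegree
  exact hne (coeff_eq_zero_of_mk_eq_add_substPow hF hn hdn)
end

section
/- Let A ⊆ ℂ be an integral domain that is finitely generated as a ℤ-algebra, and let s ∈ A be nonzero. Then there exist a finite field k and a ring homomorphism φ : A → k with φ(s) ≠ 0. -/
/-!
Inverting `s` gives a nontrivial finitely generated `ℤ`-algebra `A[s⁻¹]`; its quotient by any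
maximal ideal is a field finitely generated over `ℤ`. Since `ℤ` is a Jacobson ring, such a field
is a finitely generated abelian group (Zariski's lemma over `ℤ`). It cannot have characteristic
zero, for then it would be integral over `ℤ` and force `ℤ` to be a field; so it is torsion, hence
finite. The composite `A → A[s⁻¹] → k` does not kill `s` because `s` becomes a unit.
-/

universe u

theorem isJacobsonRing_of_jacobson_bot {R : Type*} [CommRing R] [Ring.DimensionLEOne R]
    (h : (⊥ : Ideal R).jacobson = ⊥) : IsJacobsonRing R := by
  rw [isJacobsonRing_iff_prime_eq]
  intro P hP
  rcases eq_or_ne P ⊥ with rfl | hP_ne_bot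
  · exact h
  · have := Ring.DimensionLEOne.maximalOfPrime hP_ne_bot hP
    exact Ideal.jacobson_eq_self_of_isMaximal

theorem Int.jacobson_bot : (⊥ : Ideal ℤ).jacobson = ⊥ := by
  refine le_antisymm (fun x hx => ?_) Ideal.le_jacobson
  have hunit : IsUnit (x * x + 1) := Ideal.mem_jacobson_bot.1 hx x
  rw [Ideal.mem_bot]
  rcases Int.isUnit_iff.1 hunit with h | h <;> nlinarith

instance Int.isJacobsonRing : IsJacobsonRing ℤ :=
  isJacobsonRing_of_jacobson_bot Int.jacobson_bot

theorem ringChar_ne_zero_of_isIntegral_int (K : Type*) [Field K] [Algebra ℤ K]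
    [Algebra.IsIntegral ℤ K] :
    ringChar K ≠ 0 := by
  intro h
  have : CharP K 0 := h ▸ ringChar.charP K
  have : CharZero K := CharP.charP_to_charZero K
  exact Int.not_isField <| isField_of_isIntegral_of_isField
    (algebraMap ℤ K).injective_int (Field.toIsField K)

theorem finite_of_finiteType_int (K : Type*) [Field K] [Algebra ℤ K] [Algebra.FiniteType ℤ K] :
    Finite K := by
  have hfin := finite_of_finite_type_of_isJacobsonRing ℤ K
  have := Algebra.IsIntegral.of_finite ℤ K
  -- `Module.finite_of_fg_torsion` is stated for the canonical `ℤ`-module structure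
  have : Module.Finite ℤ K :=
    Subsingleton.elim (Algebra.toModule : Module ℤ K) (AddCommGroup.toIntModule K) ▸ hfin
  have hp : (ringChar K : ℤ) ∈ nonZeroDivisors ℤ :=
    mem_nonZeroDivisors_of_ne_zero (by exact_mod_cast ringChar_ne_zero_of_isIntegral_int K)
  refine Module.finite_of_fg_torsion K fun x => ⟨⟨_, hp⟩, ?_⟩
  simp [zsmul_eq_mul]

theorem exists_ringHom_finite_field_of_finiteType_int (B : Type u) [CommRing B] [Nontrivial B]
    [Algebra ℤ B] [Algebra.FiniteType ℤ B] :
    ∃ (k : Type u) (_ : Field k) (_ : Fintype k), Nonempty (B →+* k) := by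
  obtain ⟨m, hm⟩ := Ideal.exists_maximal B
  let := Ideal.Quotient.field m
  have := Algebra.FiniteType.of_surjective (Ideal.Quotient.mkₐ ℤ m)
    (Ideal.Quotient.mkₐ_surjective ℤ m)
  have := finite_of_finiteType_int (B ⧸ m)
  exact ⟨B ⧸ m, inferInstance, Fintype.ofFinite _, ⟨Ideal.Quotient.mk m⟩⟩

theorem exists_ringHom_finite_field_apply_ne_zero {A : Type u} [CommRing A] [Algebra ℤ A]
    [Algebra.FiniteType ℤ A] {s : A} (hs : ¬IsNilpotent s) :
    ∃ (k : Type u) (_ : Field k) (_ : Fintype k) (φ : A →+* k), φ s ≠ 0 := by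
  have : Nontrivial (Localization.Away s) := by
    rw [← not_subsingleton_iff_nontrivial, IsLocalization.subsingleton_iff (M := .powers s)]
    exact hs
  obtain ⟨k, hk, hfin, ⟨ψ⟩⟩ := exists_ringHom_finite_field_of_finiteType_int (Localization.Away s)
  have hunit : IsUnit (algebraMap A (Localization.Away s) s) :=
    IsLocalization.map_units _ ⟨s, Submonoid.mem_powers s⟩
  exact ⟨k, hk, hfin, ψ.comp (algebraMap A _), (hunit.map ψ).ne_zero⟩

/-- **Finite specialization.**  If `A ⊆ ℂ` is a subring that is finitely generated as
a `ℤ`-algebra and `s ∈ A` is nonzero, then there is a ring homomorphism from `A` to a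
finite field sending `s` to a nonzero element. -/
theorem stmt_8 (A : Subring ℂ) (hA : Algebra.FiniteType ℤ A) (s : A) (hs : s ≠ 0) :
    ∃ (k : Type) (_ : Field k) (_ : Fintype k) (φ : A →+* k), φ s ≠ 0 :=
  exists_ringHom_finite_field_apply_ne_zero fun h => hs h.eq_zero
end

section
/- Let γ = (γ_n)_{n≥1} be a periodic complex sequence (there exists T ≥ 1 with γ_{n+T} = γ_n for all n ≥ 1). If the Lambert series L_γ(z) := ∑_{n≥1} γ_n z^n/(1 − z^n) is a rational function, then γ is identically zero. -/
/-- The Lambert series `L_γ(z) = ∑_{n ≥ 1} γ_n z^n / (1 - z^n)`, given by its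
coefficients: the `m`-th coefficient is the divisor sum `∑_{d ∣ m} γ d`. -/
noncomputable def LambertSeries (γ : ℕ → ℂ) : PowerSeries ℂ :=
  PowerSeries.mk fun m => ∑ d ∈ m.divisors, γ d

/-!
For a prime `p ≡ 1 (mod T)` periodicity gives `γ (p d) = γ d`, so the divisor sums `a m` satisfy
`a (p m) + [p ∣ m] a (m / p) = 2 a m`, i.e. the Lambert series `F` satisfies
`U_p F + F(z^p) = 2 F`, where `(U_p F)(z) = ∑ a (p m) z^m`. Write `F = P / Q` in lowest terms and
take `R` with `Q(z) ∣ R(z^p)` and `deg R = deg Q` (its roots are the `p`-th powers of those of `Q`).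
Then `R · U_p F = U_p (R(z^p) F)` is a polynomial, and clearing denominators in the functional
equation shows `Q(z^p) ∣ Q R`; comparing degrees, `p > 2` forces `Q` to be constant. Hence
`a m = 0` for large `m`; the relation for a prime `q ≡ 1 (mod T)` larger than `n` and than `deg P`
gives `2 a n = 0`, and Möbius inversion gives `γ = 0`.
-/

open Polynomial Finset

theorem Polynomial.exists_natDegree_eq_dvd_expand {k : Type*} [Field k] [IsAlgClosed k]
    (p : ℕ) {Q : k[X]} (hQ : Q ≠ 0) :
    ∃ R : k[X], R ≠ 0 ∧ R.natDegree = Q.natDegree ∧ Q ∣ expand k p R := by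
  refine ⟨((Q.roots.map (· ^ p)).map (X - C ·)).prod, ?_, ?_, ?_⟩
  · exact (monic_multiset_prod_of_monic _ _ fun β _ => monic_X_sub_C _).ne_zero
  · rw [natDegree_multiset_prod_X_sub_C_eq_card, Multiset.card_map,
      IsAlgClosed.card_roots_eq_natDegree]
  · refine (C_leadingCoeff_mul_prod_multiset_X_sub_C
      IsAlgClosed.card_roots_eq_natDegree).symm.dvd.trans ?_
    rw [map_multiset_prod, Multiset.map_map, Multiset.map_map]
    refine (C_mul_dvd (leadingCoeff_ne_zero.2 hQ)).2 (Multiset.prod_dvd_prod_of_dvd _ _ ?_)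
    intro β _
    simpa [C_pow] using sub_dvd_pow_sub_pow X (C β) p

theorem Polynomial.natDegree_eq_zero_of_expand_dvd_mul {R : Type*} [CommRing R] [IsDomain R]
    {p : ℕ} (hp : 2 < p) {Q S : R[X]} (hQ : Q ≠ 0) (hS : S ≠ 0)
    (hSQ : S.natDegree ≤ Q.natDegree) (h : expand R p Q ∣ Q * S) : Q.natDegree = 0 := by
  have hle := natDegree_le_of_dvd h (mul_ne_zero hQ hS)
  rw [natDegree_expand, natDegree_mul hQ hS] at hle
  have := Nat.mul_le_mul_left Q.natDegree hp
  omega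

namespace PowerSeries

section CommRing

variable {R : Type*} [CommRing R]

noncomputable def contract (p : ℕ) (f : R⟦X⟧) : R⟦X⟧ :=
  mk fun n => coeff (n * p) f

@[simp]
theorem coeff_contract (p n : ℕ) (f : R⟦X⟧) : coeff n (contract p f) = coeff (n * p) f :=
  coeff_mk _ _

theorem contract_expand_mul {p : ℕ} (hp : p ≠ 0) (g f : R⟦X⟧) :
    contract p (expand p hp g * f) = g * contract p f := by
  ext n
  have hinj : Function.Injective fun x : ℕ × ℕ => (x.1 * p, x.2 * p) := fun x y h => by
    simp only [Prod.mk.injEq, Nat.mul_left_inj hp] at h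
    exact Prod.ext h.1 h.2
  have hsub : (antidiagonal n).map ⟨_, hinj⟩ ⊆ antidiagonal (n * p) := by
    intro x hx
    obtain ⟨y, hy, rfl⟩ := mem_map.1 hx
    rw [HasAntidiagonal.mem_antidiagonal] at hy ⊢
    simp [← hy, add_mul]
  rw [coeff_contract, coeff_mul, coeff_mul, ← sum_subset hsub, sum_map]
  · simp [mul_comm _ p]
  · intro x hx hxmap
    rw [coeff_expand_of_not_dvd p hp, zero_mul]
    rintro ⟨i, hi⟩
    rw [HasAntidiagonal.mem_antidiagonal] at hx
    obtain ⟨j, hj⟩ : p ∣ x.2 := (Nat.dvd_add_right ⟨i, hi⟩).1 (hx ▸ dvd_mul_left p n)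
    refine hxmap (mem_map.2 ⟨(i, j), ?_, ?_⟩)
    · rw [HasAntidiagonal.mem_antidiagonal]
      rw [hi, hj, ← mul_add, mul_comm] at hx
      exact Nat.eq_of_mul_eq_mul_right (Nat.pos_of_ne_zero hp) hx
    · ext <;> simp [hi, hj, mul_comm]

theorem expand_coe {p : ℕ} (hp : p ≠ 0) (f : R[X]) :
    expand p hp (f : R⟦X⟧) = (Polynomial.expand R p f : R⟦X⟧) := by
  ext n
  simp [coeff_expand, Polynomial.coeff_expand (Nat.pos_of_ne_zero hp)]

theorem contract_coe {p : ℕ} (hp : p ≠ 0) (f : R[X]) :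
    contract p (f : R⟦X⟧) = (Polynomial.contract p f : R⟦X⟧) := by
  ext n
  simp [Polynomial.coeff_contract hp]

end CommRing

variable {k : Type*} [Field k]

theorem exists_isCoprime_coe_mul_eq_coe {F : k⟦X⟧} {P Q : k[X]}
    (hQ : Q ≠ 0) (hQF : (Q : k⟦X⟧) * F = P) :
    ∃ P₁ Q₁ : k[X], Q₁ ≠ 0 ∧ IsCoprime P₁ Q₁ ∧ (Q₁ : k⟦X⟧) * F = P₁ := by
  classical
  set g := GCDMonoid.gcd P Q
  have hg : g ≠ 0 := gcd_ne_zero_of_right hQ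
  have hP : g * (P / g) = P := EuclideanDomain.mul_div_cancel' hg (gcd_dvd_left P Q)
  have hQ' : g * (Q / g) = Q := EuclideanDomain.mul_div_cancel' hg (gcd_dvd_right P Q)
  refine ⟨P / g, Q / g, right_ne_zero_of_mul (hQ'.symm ▸ hQ), isCoprime_div_gcd_div_gcd hQ, ?_⟩
  apply mul_left_cancel₀ (coe_eq_zero_iff.not.2 hg)
  rw [← mul_assoc, ← Polynomial.coe_mul, hQ', hQF, ← Polynomial.coe_mul, hP]

theorem exists_coe_eq_of_contract_add_expand [IsAlgClosed k] {p : ℕ} (hp : 2 < p) {F : k⟦X⟧}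
    {c : k} (hF : contract p F + expand p (Nat.ne_zero_of_lt hp) F = c • F)
    {P Q : k[X]} (hQ : Q ≠ 0) (hQF : (Q : k⟦X⟧) * F = P) :
    ∃ P₀ : k[X], F = P₀ := by
  have hp0 : p ≠ 0 := Nat.ne_zero_of_lt hp
  obtain ⟨P₁, Q₁, hQ₁, hcop, hQ₁F⟩ := exists_isCoprime_coe_mul_eq_coe hQ hQF
  obtain ⟨R, hR, hRdeg, Qc, hQc⟩ := Polynomial.exists_natDegree_eq_dvd_expand p hQ₁
  set S := Polynomial.contract p (Qc * P₁)
  have hRS : (R : k⟦X⟧) * contract p F = S := by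
    rw [← contract_expand_mul hp0, expand_coe, hQc, Polynomial.coe_mul, mul_comm (Q₁ : k⟦X⟧),
      mul_assoc, hQ₁F, ← Polynomial.coe_mul, contract_coe hp0]
  have hexpF : (Polynomial.expand k p Q₁ : k⟦X⟧) * expand p hp0 F =
      Polynomial.expand k p P₁ := by
    rw [← expand_coe hp0, ← expand_coe hp0, ← map_mul, hQ₁F]
  have key : Q₁ * R * Polynomial.expand k p P₁ =
      Polynomial.expand k p Q₁ * (Polynomial.C c * R * P₁ - Q₁ * S) := by
    apply Polynomial.coe_inj.1
    simp only [Polynomial.coe_mul, Polynomial.coe_sub, Polynomial.coe_C, smul_eq_C_mul] at hF ⊢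
    -- `hF` multiplied by `Q₁ R Q₁(z^p)`
    linear_combination (-(Q₁ : k⟦X⟧) * R) * hexpF
      + (Polynomial.expand k p Q₁ : k⟦X⟧) * (C c * R * hQ₁F - Q₁ * hRS + Q₁ * R * hF)
  have hdvd : Polynomial.expand k p Q₁ ∣ Q₁ * R :=
    (hcop.symm.map (Polynomial.expand k p).toRingHom).dvd_of_dvd_mul_right ⟨_, key⟩
  have hdeg : Q₁.natDegree = 0 :=
    Polynomial.natDegree_eq_zero_of_expand_dvd_mul hp hQ₁ hR hRdeg.le hdvd
  rw [eq_C_of_natDegree_eq_zero hdeg, Polynomial.coe_C] at hQ₁F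
  rw [eq_C_of_natDegree_eq_zero hdeg, Ne, Polynomial.C_eq_zero] at hQ₁
  refine ⟨Polynomial.C (Q₁.coeff 0)⁻¹ * P₁, ?_⟩
  rw [Polynomial.coe_mul, Polynomial.coe_C, ← hQ₁F, ← mul_assoc, ← map_mul, inv_mul_cancel₀ hQ₁,
    map_one, one_mul]

end PowerSeries

namespace Nat

theorem divisors_filter_dvd_eq_image {p n : ℕ} (hp : p ≠ 0) (hpn : p ∣ n) :
    {d ∈ n.divisors | p ∣ d} = (n / p).divisors.image (p * ·) := by
  obtain ⟨m, rfl⟩ := hpn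
  ext d
  simp only [mem_filter, mem_divisors, mem_image, Nat.mul_div_cancel_left _ (pos_of_ne_zero hp)]
  constructor
  · rintro ⟨⟨hd, hpm⟩, e, rfl⟩
    exact ⟨e, ⟨Nat.dvd_of_mul_dvd_mul_left (pos_of_ne_zero hp) hd, right_ne_zero_of_mul hpm⟩, rfl⟩
  · rintro ⟨e, ⟨he, hm⟩, rfl⟩
    exact ⟨⟨mul_dvd_mul_left p he, mul_ne_zero hp hm⟩, dvd_mul_right p e⟩

theorem Prime.divisors_mul_filter_not_dvd {p : ℕ} (hp : p.Prime) (m : ℕ) :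
    {d ∈ (p * m).divisors | ¬p ∣ d} = {d ∈ m.divisors | ¬p ∣ d} := by
  ext d
  simp only [mem_filter, mem_divisors, and_congr_left_iff]
  intro hpd
  rw [(hp.coprime_iff_not_dvd.2 hpd).symm.dvd_mul_left, mul_ne_zero_iff, and_iff_right hp.ne_zero]

variable {M : Type*} [AddCommMonoid M] {f : ℕ → M} {p : ℕ}

theorem sum_divisors_filter_dvd (hp : p ≠ 0) (hf : ∀ d, 1 ≤ d → f (p * d) = f d) (n : ℕ) :
    ∑ d ∈ n.divisors with p ∣ d, f d = if p ∣ n then ∑ d ∈ (n / p).divisors, f d else 0 := by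
  split_ifs with hpn
  · rw [divisors_filter_dvd_eq_image hp hpn,
      sum_image fun _ _ _ _ h => Nat.eq_of_mul_eq_mul_left (pos_of_ne_zero hp) h]
    exact sum_congr rfl fun d hd => hf d (pos_of_mem_divisors hd)
  · refine sum_eq_zero fun d hd => absurd ?_ hpn
    rw [mem_filter, mem_divisors] at hd
    exact hd.2.trans hd.1.1

theorem sum_divisors_prime_mul (hp : p.Prime) (hf : ∀ d, 1 ≤ d → f (p * d) = f d) (m : ℕ) :
    ∑ d ∈ (p * m).divisors, f d + (if p ∣ m then ∑ d ∈ (m / p).divisors, f d else 0) =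
      2 • ∑ d ∈ m.divisors, f d := by
  have hsplit (n : ℕ) := (sum_filter_add_sum_filter_not n.divisors (p ∣ ·) f).symm
  have hpm : ∑ d ∈ (p * m).divisors, f d =
      ∑ d ∈ m.divisors, f d + ∑ d ∈ m.divisors with ¬p ∣ d, f d := by
    rw [hsplit, sum_divisors_filter_dvd hp.ne_zero hf, if_pos (dvd_mul_right p m),
      Nat.mul_div_cancel_left _ hp.pos, hp.divisors_mul_filter_not_dvd]
  have hm := hsplit m
  rw [sum_divisors_filter_dvd hp.ne_zero hf] at hm
  rw [hpm, add_assoc, add_comm (∑ d ∈ m.divisors with ¬p ∣ d, f d), ← hm, two_nsmul]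

end Nat

theorem apply_mul_eq_of_modEq_one {α : Type*} {γ : ℕ → α} {T : ℕ}
    (hper : ∀ n, 1 ≤ n → γ (n + T) = γ n) {q d : ℕ} (hq : 1 ≤ q) (hqT : q ≡ 1 [MOD T])
    (hd : 1 ≤ d) : γ (q * d) = γ d := by
  have hadd (k : ℕ) : γ (d + k * T) = γ d := by
    induction k with
    | zero => simp
    | succ k ih => rw [add_mul, one_mul, ← add_assoc, hper _ (by omega), ih]
  obtain ⟨k, hk⟩ := (Nat.modEq_iff_dvd' hq).1 hqT.symm
  rw [← hadd (k * d), show q * d = d + k * d * T by rw [(Nat.sub_eq_iff_eq_add hq).1 hk]; ring]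

@[simp]
theorem coeff_lambertSeries (γ : ℕ → ℂ) (m : ℕ) :
    PowerSeries.coeff m (LambertSeries γ) = ∑ d ∈ m.divisors, γ d :=
  PowerSeries.coeff_mk _ _

theorem contract_add_expand_lambertSeries {γ : ℕ → ℂ} {p : ℕ} (hp : p.Prime)
    (hγ : ∀ d, 1 ≤ d → γ (p * d) = γ d) :
    PowerSeries.contract p (LambertSeries γ) + PowerSeries.expand p hp.ne_zero (LambertSeries γ) =
      (2 : ℂ) • LambertSeries γ := by
  ext m
  rw [map_add, PowerSeries.coeff_contract, PowerSeries.coeff_expand, PowerSeries.coeff_smul,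
    coeff_lambertSeries, coeff_lambertSeries, coeff_lambertSeries, mul_comm, two_smul, ← two_nsmul,
    ← Nat.sum_divisors_prime_mul hp hγ m]

/-- If `γ` is periodic and its Lambert series is rational, then `γ` is identically
zero. -/
theorem stmt_16 (γ : ℕ → ℂ) (T : ℕ) (hT : 1 ≤ T)
    (hper : ∀ n : ℕ, 1 ≤ n → γ (n + T) = γ n)
    (hL : IsRationalPS (LambertSeries γ)) :
    ∀ n : ℕ, 1 ≤ n → γ n = 0 := by
  obtain ⟨P, Q, hQ0, hQF⟩ := hL
  have hmul {q : ℕ} (hq : q.Prime) (hqT : q ≡ 1 [MOD T]) (d : ℕ) (hd : 1 ≤ d) :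
      γ (q * d) = γ d :=
    apply_mul_eq_of_modEq_one hper hq.one_lt.le hqT hd
  obtain ⟨p, hp, hp2, hpT⟩ := Nat.exists_prime_gt_modEq_one 2 (by omega : T ≠ 0)
  obtain ⟨P₀, hP₀⟩ := PowerSeries.exists_coe_eq_of_contract_add_expand hp2
    (contract_add_expand_lambertSeries hp (hmul hp hpT)) (fun h => hQ0 (by simp [h])) hQF
  have hlarge (m : ℕ) (hm : P₀.natDegree < m) : ∑ d ∈ m.divisors, γ d = 0 := by
    rw [← coeff_lambertSeries, hP₀, Polynomial.coeff_coe, coeff_eq_zero_of_natDegree_lt hm]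
  have hsum (n : ℕ) (hn : 0 < n) : ∑ d ∈ n.divisors, γ d = 0 := by
    obtain ⟨q, hq, hqn, hqT⟩ :=
      Nat.exists_prime_gt_modEq_one (n + P₀.natDegree) (by omega : T ≠ 0)
    have h := Nat.sum_divisors_prime_mul hq (hmul hq hqT) n
    rw [hlarge (q * n) (by nlinarith), if_neg (Nat.not_dvd_of_pos_of_lt hn (by omega)),
      zero_add] at h
    simpa using h.symm
  intro n hn
  simpa [eq_comm] using (ArithmeticFunction.sum_eq_iff_sum_mul_moebius_eq (g := 0)).1 hsum n hn
end

section
/- Let (F_n)_{n≥1} be the Fibonacci sequence (F_1 = F_2 = 1, F_{n+2} = F_{n+1} + F_n). Then the Lambert series ∑_{n≥1} F_n z^n/(1 − z^n) is not a rational function. -/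
/-!
Write `G = ∑ F_n z^n`, so that the Lambert series is `∑_{t ≥ 1} G(z^t)`, and suppose `Q L = P`.
We peel off the terms `G(z^t)` one at a time, showing by induction on `e` that the coefficients
of `Q · ∑_{t > e} G(z^t)` tend to `0`. For `E = e + 1` put `x = φ^(-1/E)`. By Binet,
`√5 G(z^E) = 1/(1 - φ z^E) - 1/(1 - ψ z^E)`. After multiplying the `m`-th coefficients by `x^m`,
those of `Q · ∑_{t > E} G(z^t)` (of size about `m φ^(m/(E+1))`) and of `Q/(1 - ψ z^E)` still tend
to `0`, hence so do those of `Q/(1 - φ z^E)`. But the latter, multiplied by `x^m`, are eventually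
`E`-periodic in `m`, so they vanish: `Q/(1 - φ z^E)` is a polynomial, whence `Q(x) = 0`, and the
coefficients of `Q · ∑_{t > E} G(z^t)` tend to `0` again. Thus `Q` has the infinitely many
roots `φ^(-1/E)`, contradicting `Q(0) ≠ 0`.
-/

open Filter Finset Polynomial Topology
open scoped goldenRatio PowerSeries

section PolynomialTimesSeries

variable {R : Type*} [CommSemiring R]

theorem Polynomial.coeff_coe_mul_mk (Q : R[X]) (c : ℕ → R) {m : ℕ} (hm : Q.natDegree ≤ m) :
    PowerSeries.coeff m ((Q : R⟦X⟧) * PowerSeries.mk c) =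
      ∑ j ∈ range (Q.natDegree + 1), Q.coeff j * c (m - j) := by
  rw [PowerSeries.coeff_mul, Nat.sum_antidiagonal_eq_sum_range_succ_mk]
  simp only [Polynomial.coeff_coe, PowerSeries.coeff_mk]
  refine (sum_subset (range_subset_range.2 (by omega)) fun j _ hj ↦ ?_).symm
  rw [coeff_eq_zero_of_natDegree_lt (by simpa using hj), zero_mul]

theorem Polynomial.coeff_coe_mul_mk_add {Q : R[X]} {c : ℕ → R} {a : R} {E m : ℕ}
    (hc : ∀ n, c (n + E) = a * c n) (hm : Q.natDegree ≤ m) :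
    PowerSeries.coeff (m + E) ((Q : R⟦X⟧) * PowerSeries.mk c) =
      a * PowerSeries.coeff m ((Q : R⟦X⟧) * PowerSeries.mk c) := by
  rw [Q.coeff_coe_mul_mk c hm, Q.coeff_coe_mul_mk c (by omega), mul_sum]
  refine sum_congr rfl fun j hj ↦ ?_
  rw [show m + E - j = m - j + E by have := mem_range.1 hj; omega, hc]
  ring

theorem Polynomial.tendsto_pow_mul_coeff_coe_mul_mk [TopologicalSpace R] [IsTopologicalSemiring R]
    (Q : R[X]) {c : ℕ → R} {x : R} (hc : Tendsto (fun n ↦ x ^ n * c n) atTop (𝓝 0)) :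
    Tendsto (fun m ↦ x ^ m * PowerSeries.coeff m ((Q : R⟦X⟧) * PowerSeries.mk c)) atTop (𝓝 0) := by
  have hsum : Tendsto (fun m ↦ ∑ j ∈ range (Q.natDegree + 1),
      Q.coeff j * x ^ j * (x ^ (m - j) * c (m - j))) atTop (𝓝 0) := by
    simpa using tendsto_finsetSum _ fun j _ ↦
      (hc.comp (tendsto_sub_atTop_nat j)).const_mul (Q.coeff j * x ^ j)
  refine hsum.congr' ?_
  filter_upwards [eventually_ge_atTop Q.natDegree] with m hm
  rw [Q.coeff_coe_mul_mk c hm, mul_sum]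
  refine sum_congr rfl fun j hj ↦ ?_
  rw [← pow_sub_mul_pow x (show j ≤ m by have := mem_range.1 hj; omega)]
  ring

end PolynomialTimesSeries

theorem eq_of_tendsto_of_add_eq {α : Type*} [TopologicalSpace α] [T2Space α] {w : ℕ → α} {a : α}
    {N E : ℕ} (hE : 0 < E) (hper : ∀ m ≥ N, w (m + E) = w m) (hw : Tendsto w atTop (𝓝 a))
    {m : ℕ} (hm : N ≤ m) : w m = a := by
  have hconst : ∀ k, w (m + E * k) = w m := by
    intro k
    induction k with
    | zero => simp
    | succ k ih => rw [mul_add, mul_one, ← add_assoc, hper _ (by omega), ih]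
  have hk : Tendsto (fun k ↦ m + E * k) atTop atTop :=
    tendsto_atTop_mono (fun k ↦ (Nat.le_mul_of_pos_left k hE).trans (Nat.le_add_left _ _))
      tendsto_id
  have hlim : Tendsto (fun _ : ℕ ↦ w m) atTop (𝓝 a) := by
    simpa only [Function.comp_def, hconst] using hw.comp hk
  exact tendsto_nhds_unique tendsto_const_nhds hlim

section DilatedGeometric

variable {R : Type*} [CommRing R]

def dilatedGeom (a : R) (E n : ℕ) : R := if E ∣ n then a ^ (n / E) else 0

theorem dilatedGeom_add_self {a : R} {E : ℕ} (hE : 0 < E) (n : ℕ) :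
    dilatedGeom a E (n + E) = a * dilatedGeom a E n := by
  simp only [dilatedGeom, Nat.dvd_add_self_right, Nat.add_div_right n hE, pow_succ']
  split_ifs <;> simp

theorem one_sub_C_mul_X_pow_mul_mk_dilatedGeom {a : R} {E : ℕ} (hE : 0 < E) :
    (1 - PowerSeries.C a * PowerSeries.X ^ E) * PowerSeries.mk (dilatedGeom a E) = 1 := by
  ext n
  rw [sub_mul, one_mul, mul_assoc, map_sub, PowerSeries.coeff_C_mul, PowerSeries.coeff_X_pow_mul',
    PowerSeries.coeff_mk, PowerSeries.coeff_one]
  split_ifs with hn h0 h0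
  · omega
  · obtain ⟨k, rfl⟩ := Nat.exists_eq_add_of_le' hn
    rw [Nat.add_sub_cancel, PowerSeries.coeff_mk, dilatedGeom_add_self hE, sub_self]
  · simp [h0, dilatedGeom]
  · rw [mul_zero, sub_zero, dilatedGeom,
      if_neg fun hd ↦ h0 (Nat.eq_zero_of_dvd_of_lt hd (by omega))]

theorem Polynomial.eval_eq_zero_of_coeff_coe_mul_mk_dilatedGeom {Q : R[X]} {a y : R} {E : ℕ}
    (hE : 0 < E) (hy : a * y ^ E = 1)
    (h : ∀ᶠ m in atTop, PowerSeries.coeff m ((Q : R⟦X⟧) * PowerSeries.mk (dilatedGeom a E)) = 0) :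
    Q.eval y = 0 := by
  obtain ⟨N, hN⟩ := eventually_atTop.1 h
  set T := PowerSeries.trunc N ((Q : R⟦X⟧) * PowerSeries.mk (dilatedGeom a E))
  have hT : (T : R⟦X⟧) = (Q : R⟦X⟧) * PowerSeries.mk (dilatedGeom a E) := by
    ext m
    rw [Polynomial.coeff_coe, PowerSeries.coeff_trunc]
    split_ifs with hm
    · rfl
    · exact (hN m (by omega)).symm
  have hQ : Q = (1 - C a * X ^ E) * T := by
    apply Polynomial.coe_injective R
    push_cast
    rw [hT, mul_left_comm, one_sub_C_mul_X_pow_mul_mk_dilatedGeom hE, mul_one]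
  rw [hQ, eval_mul]
  simp [hy]

theorem tendsto_dilatedGeom {𝕜 : Type*} [NormedField 𝕜] {a : 𝕜} {E : ℕ} (ha : ‖a‖ < 1)
    (hE : 0 < E) : Tendsto (dilatedGeom a E) atTop (𝓝 0) := by
  refine squeeze_zero_norm (fun n ↦ ?_)
    ((tendsto_pow_atTop_nhds_zero_of_lt_one (norm_nonneg a) ha).comp
      (Nat.tendsto_div_const_atTop hE.ne'))
  unfold dilatedGeom
  split_ifs <;> simp

end DilatedGeometric

def fibTail (e m : ℕ) : ℕ := ∑ t ∈ m.divisors with e < t, Nat.fib (m / t)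

theorem fibTail_zero (m : ℕ) : fibTail 0 m = ∑ d ∈ m.divisors, Nat.fib d := by
  rw [fibTail, filter_true_of_mem fun t ht ↦ Nat.pos_of_mem_divisors ht, Nat.sum_div_divisors]

theorem fibTail_eq_fibTail_succ_add (e m : ℕ) :
    fibTail e m = fibTail (e + 1) m + if e + 1 ∣ m then Nat.fib (m / (e + 1)) else 0 := by
  have hsplit : ∀ t, (if e < t then Nat.fib (m / t) else 0) =
      (if e + 1 < t then Nat.fib (m / t) else 0) + if e + 1 = t then Nat.fib (m / t) else 0 := by
    intro t
    split_ifs <;> omega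
  rw [fibTail, fibTail, sum_filter, sum_filter, sum_congr rfl fun t _ ↦ hsplit t, sum_add_distrib,
    sum_ite_eq]
  rcases eq_or_ne m 0 with rfl | hm
  · simp
  · simp [Nat.mem_divisors, hm]

theorem fibTail_le (e m : ℕ) : fibTail e m ≤ m * Nat.fib (m / (e + 1)) :=
  calc fibTail e m ≤ ∑ t ∈ m.divisors with e < t, Nat.fib (m / (e + 1)) :=
        sum_le_sum fun t ht ↦ Nat.fib_mono (Nat.div_le_div_left (mem_filter.1 ht).2 e.succ_pos)
    _ ≤ m * Nat.fib (m / (e + 1)) := by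
        rw [sum_const, smul_eq_mul]
        exact Nat.mul_le_mul_right _ ((card_filter_le _ _).trans (Nat.card_divisors_le_self m))

theorem fib_le_goldenRatio_pow (n : ℕ) : (Nat.fib n : ℝ) ≤ φ ^ n := by
  cases n with
  | zero => simp
  | succ n =>
    have h := Real.goldenRatio_mul_fib_succ_add_fib n
    have : φ * Nat.fib (n + 1) ≤ φ * φ ^ n := by
      rw [← pow_succ']
      linarith [(Nat.fib n).cast_nonneg (α := ℝ)]
    exact (le_of_mul_le_mul_left this Real.goldenRatio_pos).trans
      (pow_le_pow_right₀ Real.one_lt_goldenRatio.le n.le_succ)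

theorem sqrt_five_mul_fib (n : ℕ) : (√5 : ℂ) * Nat.fib n = (φ : ℂ) ^ n - (ψ : ℂ) ^ n := by
  have h5 : (√5 : ℝ) ≠ 0 := by positivity
  exact_mod_cast (by rw [Real.coe_fib_eq]; field_simp : √5 * (Nat.fib n : ℝ) = φ ^ n - ψ ^ n)

theorem sqrt_five_mul_fibTail (e n : ℕ) :
    (√5 : ℂ) * fibTail e n = √5 * fibTail (e + 1) n + dilatedGeom (φ : ℂ) (e + 1) n -
      dilatedGeom (ψ : ℂ) (e + 1) n := by
  rw [fibTail_eq_fibTail_succ_add, dilatedGeom, dilatedGeom]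
  split_ifs
  · rw [Nat.cast_add, mul_add, sqrt_five_mul_fib]
    ring
  · simp

theorem norm_goldenConj_lt_one : ‖(ψ : ℂ)‖ < 1 := by
  rw [Complex.norm_real, Real.norm_eq_abs, abs_lt]
  exact ⟨Real.neg_one_lt_goldenConj, Real.goldenConj_neg.trans one_pos⟩

noncomputable def goldenRoot (E : ℕ) : ℝ := φ ^ (E : ℝ)⁻¹

theorem goldenRoot_pos (E : ℕ) : 0 < goldenRoot E := Real.rpow_pos_of_pos Real.goldenRatio_pos _

theorem one_le_goldenRoot (E : ℕ) : 1 ≤ goldenRoot E :=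
  Real.one_le_rpow Real.one_lt_goldenRatio.le (by positivity)

theorem goldenRoot_pow {E : ℕ} (hE : E ≠ 0) : goldenRoot E ^ E = φ :=
  Real.rpow_inv_natCast_pow Real.goldenRatio_pos.le hE

theorem goldenRatio_mul_inv_goldenRoot_pow {E : ℕ} (hE : E ≠ 0) :
    (φ : ℂ) * (((goldenRoot E)⁻¹ : ℝ) : ℂ) ^ E = 1 := by
  rw [← Complex.ofReal_pow, ← Complex.ofReal_mul, inv_pow, goldenRoot_pow hE,
    mul_inv_cancel₀ Real.goldenRatio_ne_zero, Complex.ofReal_one]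

theorem goldenRoot_succ_lt {E : ℕ} (hE : 0 < E) : goldenRoot (E + 1) < goldenRoot E :=
  Real.rpow_lt_rpow_of_exponent_lt Real.one_lt_goldenRatio
    (by gcongr; exact_mod_cast E.lt_succ_self)

theorem one_lt_goldenRoot {E : ℕ} (hE : 0 < E) : 1 < goldenRoot E :=
  (one_le_goldenRoot (E + 1)).trans_lt (goldenRoot_succ_lt hE)

theorem strictAnti_goldenRoot_succ : StrictAnti fun e : ℕ ↦ goldenRoot (e + 1) :=
  strictAnti_nat_of_succ_lt fun e ↦ goldenRoot_succ_lt e.succ_pos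

theorem tendsto_inv_goldenRoot_pow_mul_fibTail {E : ℕ} (hE : 0 < E) :
    Tendsto (fun n ↦ (goldenRoot E)⁻¹ ^ n * fibTail E n) atTop (𝓝 0) := by
  have hpos := goldenRoot_pos E
  set r := goldenRoot (E + 1) / goldenRoot E
  have hr0 : 0 ≤ r := div_nonneg (goldenRoot_pos _).le hpos.le
  have hr1 : r < 1 := (div_lt_one hpos).2 (goldenRoot_succ_lt hE)
  refine squeeze_zero (fun n ↦ by positivity) (fun n ↦ ?_)
    (tendsto_self_mul_const_pow_of_lt_one hr0 hr1)
  have hfib : (fibTail E n : ℝ) ≤ n * goldenRoot (E + 1) ^ n :=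
    calc (fibTail E n : ℝ) ≤ n * Nat.fib (n / (E + 1)) := by exact_mod_cast fibTail_le E n
      _ ≤ n * φ ^ (n / (E + 1)) := by gcongr; exact fib_le_goldenRatio_pow _
      _ = n * goldenRoot (E + 1) ^ ((E + 1) * (n / (E + 1))) := by
        rw [pow_mul, goldenRoot_pow E.succ_ne_zero]
      _ ≤ n * goldenRoot (E + 1) ^ n := by
        gcongr
        · exact one_le_goldenRoot _
        · exact Nat.mul_div_le n (E + 1)
  calc (goldenRoot E)⁻¹ ^ n * fibTail E n
      ≤ (goldenRoot E)⁻¹ ^ n * (n * goldenRoot (E + 1) ^ n) := by gcongr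
    _ = n * r ^ n := by rw [div_pow, div_eq_mul_inv, inv_pow]; ring

section LambertSeriesOfFib

noncomputable def fibTailSeries (e : ℕ) : ℂ⟦X⟧ := PowerSeries.mk fun n ↦ (fibTail e n : ℂ)

theorem lambertSeries_eq_fibTailSeries {F : ℕ → ℂ} (h1 : F 1 = 1) (h2 : F 2 = 1)
    (hrec : ∀ n : ℕ, 1 ≤ n → F (n + 2) = F (n + 1) + F n) :
    LambertSeries F = fibTailSeries 0 := by
  have hF : ∀ n, F (n + 1) = Nat.fib (n + 1) ∧ F (n + 2) = Nat.fib (n + 2) := by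
    intro n
    induction n with
    | zero => simp [h1, h2]
    | succ n ih =>
      refine ⟨ih.2, ?_⟩
      rw [hrec (n + 1) n.succ_pos, ih.1, ih.2, Nat.fib_add_two (n := n + 1), Nat.cast_add, add_comm]
  ext m
  rw [LambertSeries, fibTailSeries, PowerSeries.coeff_mk, PowerSeries.coeff_mk, fibTail_zero,
    Nat.cast_sum]
  refine sum_congr rfl fun d hd ↦ ?_
  obtain ⟨n, rfl⟩ := Nat.exists_eq_succ_of_ne_zero (Nat.pos_of_mem_divisors hd).ne'
  exact (hF n).1

theorem sqrt_five_mul_coeff_mul_fibTailSeries (Q : ℂ[X]) (e m : ℕ) :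
    √5 * PowerSeries.coeff m ((Q : ℂ⟦X⟧) * fibTailSeries e) =
      √5 * PowerSeries.coeff m ((Q : ℂ⟦X⟧) * fibTailSeries (e + 1)) +
        PowerSeries.coeff m ((Q : ℂ⟦X⟧) * PowerSeries.mk (dilatedGeom (φ : ℂ) (e + 1))) -
        PowerSeries.coeff m ((Q : ℂ⟦X⟧) * PowerSeries.mk (dilatedGeom (ψ : ℂ) (e + 1))) := by
  have hseries : PowerSeries.C (√5 : ℂ) * fibTailSeries e =
      PowerSeries.C (√5 : ℂ) * fibTailSeries (e + 1) +
        PowerSeries.mk (dilatedGeom (φ : ℂ) (e + 1)) -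
        PowerSeries.mk (dilatedGeom (ψ : ℂ) (e + 1)) := by
    ext n
    simp only [fibTailSeries, map_sub, map_add, PowerSeries.coeff_C_mul, PowerSeries.coeff_mk]
    exact sqrt_five_mul_fibTail e n
  rw [← PowerSeries.coeff_C_mul, ← PowerSeries.coeff_C_mul, mul_left_comm, hseries, mul_sub,
    mul_add, map_sub, map_add, mul_left_comm, PowerSeries.coeff_C_mul]

variable {Q : ℂ[X]}

theorem eventually_coeff_mul_dilatedGeom_goldenRatio_eq_zero {e : ℕ}
    (h : Tendsto (fun m ↦ PowerSeries.coeff m ((Q : ℂ⟦X⟧) * fibTailSeries e)) atTop (𝓝 0)) :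
    ∀ᶠ m in atTop,
      PowerSeries.coeff m ((Q : ℂ⟦X⟧) * PowerSeries.mk (dilatedGeom (φ : ℂ) (e + 1))) = 0 := by
  set x : ℂ := (((goldenRoot (e + 1))⁻¹ : ℝ) : ℂ) with hx
  have hx1 : ‖x‖ < 1 := by
    rw [hx, Complex.norm_real, norm_inv, Real.norm_of_nonneg (goldenRoot_pos _).le]
    exact inv_lt_one_of_one_lt₀ (one_lt_goldenRoot e.succ_pos)
  have hx0 : x ≠ 0 := by simp [hx, (goldenRoot_pos _).ne']
  have hφx : (φ : ℂ) * x ^ (e + 1) = 1 := goldenRatio_mul_inv_goldenRoot_pow e.succ_ne_zero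
  have hxpow : Tendsto (x ^ ·) atTop (𝓝 0) := tendsto_pow_atTop_nhds_zero_of_norm_lt_one hx1
  have htail : Tendsto (fun m ↦ x ^ m * PowerSeries.coeff m ((Q : ℂ⟦X⟧) * fibTailSeries e))
      atTop (𝓝 0) := by simpa using hxpow.mul h
  have htail' : Tendsto (fun m ↦ x ^ m * PowerSeries.coeff m ((Q : ℂ⟦X⟧) * fibTailSeries (e + 1)))
      atTop (𝓝 0) := by
    refine Q.tendsto_pow_mul_coeff_coe_mul_mk ?_
    simpa [hx, Function.comp_def] using (Complex.continuous_ofReal.tendsto 0).comp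
      (tendsto_inv_goldenRoot_pow_mul_fibTail e.succ_pos)
  have hψ : Tendsto (fun m ↦ x ^ m *
      PowerSeries.coeff m ((Q : ℂ⟦X⟧) * PowerSeries.mk (dilatedGeom (ψ : ℂ) (e + 1))))
      atTop (𝓝 0) :=
    Q.tendsto_pow_mul_coeff_coe_mul_mk
      (by simpa using hxpow.mul (tendsto_dilatedGeom norm_goldenConj_lt_one e.succ_pos))
  set w := fun m ↦ x ^ m *
    PowerSeries.coeff m ((Q : ℂ⟦X⟧) * PowerSeries.mk (dilatedGeom (φ : ℂ) (e + 1)))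
  have hw : Tendsto w atTop (𝓝 0) := by
    have hlim := ((htail.sub htail').const_mul (√5 : ℂ)).add hψ
    rw [sub_zero, mul_zero, zero_add] at hlim
    refine hlim.congr fun m ↦ ?_
    linear_combination x ^ m * sqrt_five_mul_coeff_mul_fibTailSeries Q e m
  have hper : ∀ m ≥ Q.natDegree, w (m + (e + 1)) = w m := by
    intro m hm
    simp only [w]
    rw [Q.coeff_coe_mul_mk_add (dilatedGeom_add_self e.succ_pos) hm, pow_add]
    linear_combination x ^ m * PowerSeries.coeff m ((Q : ℂ⟦X⟧) *
      PowerSeries.mk (dilatedGeom (φ : ℂ) (e + 1))) * hφx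
  filter_upwards [eventually_ge_atTop Q.natDegree] with m hm
  exact (mul_eq_zero.1 (eq_of_tendsto_of_add_eq e.succ_pos hper hw hm)).resolve_left
    (pow_ne_zero _ hx0)

theorem tendsto_coeff_mul_fibTailSeries_succ {e : ℕ}
    (h : Tendsto (fun m ↦ PowerSeries.coeff m ((Q : ℂ⟦X⟧) * fibTailSeries e)) atTop (𝓝 0)) :
    Tendsto (fun m ↦ PowerSeries.coeff m ((Q : ℂ⟦X⟧) * fibTailSeries (e + 1))) atTop (𝓝 0) := by
  have hψ : Tendsto (fun m ↦
      PowerSeries.coeff m ((Q : ℂ⟦X⟧) * PowerSeries.mk (dilatedGeom (ψ : ℂ) (e + 1))))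
      atTop (𝓝 0) := by
    simpa using Q.tendsto_pow_mul_coeff_coe_mul_mk (x := 1)
      (by simpa using tendsto_dilatedGeom norm_goldenConj_lt_one e.succ_pos)
  have hlim := h.add (hψ.div_const (√5 : ℂ))
  rw [zero_div, add_zero] at hlim
  refine hlim.congr' ?_
  filter_upwards [eventually_coeff_mul_dilatedGeom_goldenRatio_eq_zero h] with m hm
  have h5 : (√5 : ℂ) ≠ 0 := by exact_mod_cast (by positivity : (√5 : ℝ) ≠ 0)
  have := sqrt_five_mul_coeff_mul_fibTailSeries Q e m
  rw [hm] at this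
  field_simp
  linear_combination this

end LambertSeriesOfFib

/-- The Lambert series of the Fibonacci sequence is not rational. -/
theorem stmt_17 (F : ℕ → ℂ) (h1 : F 1 = 1) (h2 : F 2 = 1)
    (hrec : ∀ n : ℕ, 1 ≤ n → F (n + 2) = F (n + 1) + F n) :
    ¬ IsRationalPS (LambertSeries F) := by
  rintro ⟨P, Q, hQ0, hQL⟩
  rw [lambertSeries_eq_fibTailSeries h1 h2 hrec] at hQL
  have hbase :
      Tendsto (fun m ↦ PowerSeries.coeff m ((Q : ℂ⟦X⟧) * fibTailSeries 0)) atTop (𝓝 0) := by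
    refine tendsto_const_nhds.congr' ?_
    filter_upwards [eventually_gt_atTop P.natDegree] with m hm
    rw [hQL, Polynomial.coeff_coe, coeff_eq_zero_of_natDegree_lt hm]
  have htail (e : ℕ) :
      Tendsto (fun m ↦ PowerSeries.coeff m ((Q : ℂ⟦X⟧) * fibTailSeries e)) atTop (𝓝 0) := by
    induction e with
    | zero => exact hbase
    | succ e ih => exact tendsto_coeff_mul_fibTailSeries_succ ih
  have hroot (e : ℕ) : Q.IsRoot (((goldenRoot (e + 1))⁻¹ : ℝ) : ℂ) :=
    Q.eval_eq_zero_of_coeff_coe_mul_mk_dilatedGeom e.succ_pos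
      (goldenRatio_mul_inv_goldenRoot_pow e.succ_ne_zero)
      (eventually_coeff_mul_dilatedGeom_goldenRatio_eq_zero (htail e))
  have hinj : Function.Injective fun e : ℕ ↦ (((goldenRoot (e + 1))⁻¹ : ℝ) : ℂ) :=
    Complex.ofReal_injective.comp (inv_injective.comp strictAnti_goldenRoot_succ.injective)
  have hQ : Q = 0 := eq_zero_of_infinite_isRoot Q (Set.infinite_of_injective_forall_mem hinj hroot)
  exact hQ0 (by rw [hQ, coeff_zero])
end
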